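/- arXiv:1605.07784 — 2 statements merged into one kernel-verified Lean document; each statement's English description precedes it below -/
import Mathlib

section
/- For any vectors x ∈ ℝ^{d1}, y ∈ ℝ^{d2}, any β > 0, and any index set Ω ⊆ [d1]×[d2] with at most α·d2 elements in each row and at most α·d1 elements in each column, we have Σ_{(i,j)∈Ω} |x_i|·|y_j| ≤ (α/2)·(β^{-1}·d2·‖x‖_2² + β·d1·‖y‖_2²). -/
open Matrix
open scoped BigOperators

/-- Frobenius norm of a real matrix. -/
noncomputable def frob {m n : ℕ} (A : Matrix (Fin m) (Fin n) ℝ) : ℝ :=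
  Real.sqrt (∑ i, ∑ j, (A i j) ^ 2)

/-- Operator (spectral) norm of a real matrix. -/
noncomputable def opNorm {m n : ℕ} (A : Matrix (Fin m) (Fin n) ℝ) : ℝ :=
  ‖LinearMap.toContinuousLinearMap (Matrix.toEuclideanLin A)‖

/-- Maximum absolute entry of a matrix. -/
noncomputable def entrySup {m n : ℕ} (A : Matrix (Fin m) (Fin n) ℝ) : ℝ :=
  ⨆ i, ⨆ j, |A i j|

/-- ℓ2 norm of the i-th row of a matrix. -/
noncomputable def rowNorm {m n : ℕ} (A : Matrix (Fin m) (Fin n) ℝ) (i : Fin m) : ℝ :=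
  Real.sqrt (∑ j, (A i j) ^ 2)

/-- The (2,∞) norm: maximum ℓ2 norm of the rows. -/
noncomputable def twoInf {m n : ℕ} (A : Matrix (Fin m) (Fin n) ℝ) : ℝ :=
  ⨆ i, rowNorm A i

/-! Weighted AM–GM on each term of `Ω`, then summing over rows and columns: each `x i ^ 2`
is counted at most `α * d2` times and each `y j ^ 2` at most `α * d1` times. -/

theorem two_mul_le_inv_mul_sq_add_mul_sq {R : Type*}
    [Field R] [LinearOrder R] [IsStrictOrderedRing R] {β : R} (hβ : 0 < β) (a b : R) :
    2 * (a * b) ≤ β⁻¹ * a ^ 2 + β * b ^ 2 := by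
  have key : 0 ≤ β⁻¹ * (a - β * b) ^ 2 := by positivity
  have expand : β⁻¹ * (a - β * b) ^ 2 = β⁻¹ * a ^ 2 + β * b ^ 2 - 2 * (a * b) := by
    field_simp
    ring
  linarith

theorem Finset.sum_comp_le_mul_sum {ι κ R : Type*} [Fintype ι] [DecidableEq ι]
    [CommSemiring R] [PartialOrder R] [IsOrderedRing R]
    (s : Finset κ) (g : κ → ι) {f : ι → R} (hf : ∀ i, 0 ≤ f i) {c : R}
    (hc : ∀ i, ((s.filter fun k => g k = i).card : R) ≤ c) :
    ∑ k ∈ s, f (g k) ≤ c * ∑ i, f i := by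
  calc ∑ k ∈ s, f (g k)
      = ∑ i, ((s.filter fun k => g k = i).card : R) * f i := by
        rw [← Finset.sum_fiberwise s g]
        refine Finset.sum_congr rfl fun i _ => ?_
        rw [Finset.sum_congr rfl fun k hk => by rw [(Finset.mem_filter.mp hk).2],
          Finset.sum_const, nsmul_eq_mul]
    _ ≤ ∑ i, c * f i := Finset.sum_le_sum fun i _ => mul_le_mul_of_nonneg_right (hc i) (hf i)
    _ = c * ∑ i, f i := (Finset.mul_sum ..).symm

theorem stmt1 {d1 d2 : ℕ} (α β : ℝ) (hβ : 0 < β)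
    (x : Fin d1 → ℝ) (y : Fin d2 → ℝ) (Ω : Finset (Fin d1 × Fin d2))
    (hrow : ∀ i : Fin d1, ((Ω.filter (fun p => p.1 = i)).card : ℝ) ≤ α * d2)
    (hcol : ∀ j : Fin d2, ((Ω.filter (fun p => p.2 = j)).card : ℝ) ≤ α * d1) :
    ∑ p ∈ Ω, |x p.1| * |y p.2| ≤
      (α / 2) * (β⁻¹ * d2 * (∑ i, (x i) ^ 2) + β * d1 * (∑ j, (y j) ^ 2)) := by
  have hrow_sq : ∑ p ∈ Ω, x p.1 ^ 2 ≤ α * d2 * ∑ i, x i ^ 2 :=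
    Ω.sum_comp_le_mul_sum Prod.fst (fun i => sq_nonneg (x i)) hrow
  have hcol_sq : ∑ p ∈ Ω, y p.2 ^ 2 ≤ α * d1 * ∑ j, y j ^ 2 :=
    Ω.sum_comp_le_mul_sum Prod.snd (fun j => sq_nonneg (y j)) hcol
  calc ∑ p ∈ Ω, |x p.1| * |y p.2|
      ≤ ∑ p ∈ Ω, (β⁻¹ * x p.1 ^ 2 + β * y p.2 ^ 2) / 2 := by
        refine Finset.sum_le_sum fun p _ => ?_
        have := two_mul_le_inv_mul_sq_add_mul_sq hβ |x p.1| |y p.2|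
        rw [sq_abs, sq_abs] at this
        linarith
    _ = (β⁻¹ * ∑ p ∈ Ω, x p.1 ^ 2 + β * ∑ p ∈ Ω, y p.2 ^ 2) / 2 := by
        rw [← Finset.sum_div, Finset.mul_sum, Finset.mul_sum, Finset.sum_add_distrib]
    _ ≤ (β⁻¹ * (α * d2 * ∑ i, x i ^ 2) + β * (α * d1 * ∑ j, y j ^ 2)) / 2 := by
        gcongr
    _ = (α / 2) * (β⁻¹ * d2 * (∑ i, (x i) ^ 2) + β * d1 * (∑ j, (y j) ^ 2)) := by ring
end

section
/- For any U, U_π* ∈ ℝ^{d1×r} and V, V_π* ∈ ℝ^{d2×r} with U_π*ᵀU_π* = V_π*ᵀV_π*, the following identity-type inequality holds: ‖UᵀU − VᵀV‖_F² ≥ ‖UUᵀ − U_π*U_π*ᵀ‖_F² + ‖VVᵀ − V_π*V_π*ᵀ‖_F² − 2‖UVᵀ − U_π*V_π*ᵀ‖_F². -/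
open Matrix
open scoped BigOperators

lemma frob_sq_eq_trace {m n : ℕ} (A : Matrix (Fin m) (Fin n) ℝ) :
    frob A ^ 2 = Matrix.trace (Aᵀ * A) := by
  have h : (0:ℝ) ≤ ∑ i, ∑ j, (A i j) ^ 2 := by positivity
  rw [frob, Real.sq_sqrt h, Matrix.trace, Finset.sum_comm]
  simp [Matrix.diag, Matrix.mul_apply, sq]

lemma trace_tt_nonneg {m n : ℕ} (A : Matrix (Fin m) (Fin n) ℝ) :
    0 ≤ Matrix.trace (Aᵀ * A) := by
  rw [← frob_sq_eq_trace]; positivity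

lemma ip_symm {m n : ℕ} (X Y : Matrix (Fin m) (Fin n) ℝ) :
    Matrix.trace (Yᵀ * X) = Matrix.trace (Xᵀ * Y) := by
  rw [← Matrix.trace_transpose (Yᵀ * X), Matrix.transpose_mul, Matrix.transpose_transpose]

lemma ip_expand {m n : ℕ} (X Y : Matrix (Fin m) (Fin n) ℝ) :
    Matrix.trace ((X - Y)ᵀ * (X - Y))
      = Matrix.trace (Xᵀ * X) - 2 * Matrix.trace (Xᵀ * Y) + Matrix.trace (Yᵀ * Y) := by
  simp [Matrix.transpose_sub, Matrix.sub_mul, Matrix.mul_sub, ip_symm Y X]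
  ring

lemma cross {d1 d2 r s : ℕ} (U : Matrix (Fin d1) (Fin r) ℝ) (V : Matrix (Fin d2) (Fin r) ℝ)
    (X : Matrix (Fin d1) (Fin s) ℝ) (Y : Matrix (Fin d2) (Fin s) ℝ) :
    Matrix.trace ((U * Vᵀ)ᵀ * (X * Yᵀ)) = Matrix.trace ((Xᵀ * U)ᵀ * (Yᵀ * V)) := by
  rw [Matrix.transpose_mul, Matrix.transpose_transpose, Matrix.transpose_mul,
    Matrix.transpose_transpose]
  rw [Matrix.mul_assoc, Matrix.trace_mul_comm, Matrix.mul_assoc, Matrix.mul_assoc,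
    Matrix.mul_assoc]

theorem stmt5 {d1 d2 r : ℕ}
    (U Up : Matrix (Fin d1) (Fin r) ℝ) (V Vp : Matrix (Fin d2) (Fin r) ℝ)
    (hbal : Upᵀ * Up = Vpᵀ * Vp) :
    frob (U * Uᵀ - Up * Upᵀ) ^ 2 + frob (V * Vᵀ - Vp * Vpᵀ) ^ 2
        - 2 * frob (U * Vᵀ - Up * Vpᵀ) ^ 2
      ≤ frob (Uᵀ * U - Vᵀ * V) ^ 2 := by
  have hres := trace_tt_nonneg (Upᵀ * U - Vpᵀ * V)
  rw [ip_expand] at hres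
  rw [frob_sq_eq_trace, frob_sq_eq_trace, frob_sq_eq_trace, frob_sq_eq_trace,
    ip_expand, ip_expand, ip_expand, ip_expand,
    cross U U U U, cross U U Up Up, cross Up Up Up Up,
    cross V V V V, cross V V Vp Vp, cross Vp Vp Vp Vp,
    cross U V U V, cross U V Up Vp, cross Up Vp Up Vp,
    hbal]
  linarith
end
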